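/- Let h, k be positive irrational reals with 1/h + 1/k = 1 and h + k = β ∈ ℤ. Let T = conv{(0,0),(h,0),(0,k)} and let P = T ∪ ρ(T) where ρ is the reflection (x,y) ↦ (x,-y). Then for every positive integer t, #(tP ∩ ℤ²) = (h+k)t² + (h+k)t - ⌊ht⌋ + 1. -/

import Mathlib

/-!
Since `1/h + 1/k = 1`, a lattice point `(m, n)` has `m/h + n/k = m + (n - m)/k`, so its level
`s = ⌈m/h + n/k⌉` equals `m + ⌈(n - m)/k⌉` and `(m, n) ↦ (s, n - m)` is a bijection of `ℤ²`.
It carries the lattice points of `tT` onto `{(s, d) | 0 ≤ s ≤ t, -sh ≤ d ≤ sk}`, whose row `s`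
has `⌊sh⌋ + ⌊sk⌋ + 1` points; for `s ≥ 1` this is `βs`, because `sh` is irrational and
`sh + sk = sβ`. Summing gives `#(tT ∩ ℤ²) = (β/2)t² + (β/2)t + 1`, and inclusion–exclusion over
`tT` and its mirror image, which meet in the `⌊ht⌋ + 1` lattice points of `tE`, gives the count
for `tP`.
-/

open Pointwise

/-- The integer lattice ℤ² inside ℝ². -/
def latticeZ2 : Set (ℝ × ℝ) := {p | ∃ m n : ℤ, p = ((m : ℝ), (n : ℝ))}

open Finset

theorem convexHull_triangle {a b : ℝ} (ha : 0 < a) (hb : 0 < b) :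
    convexHull ℝ {((0 : ℝ), (0 : ℝ)), (a, 0), (0, b)} =
      {p : ℝ × ℝ | 0 ≤ p.1 ∧ 0 ≤ p.2 ∧ p.1 / a + p.2 / b ≤ 1} := by
  apply subset_antisymm
  · refine convexHull_min ?_ ?_
    · rintro _ (rfl | rfl | rfl) <;> simp [ha.ne', hb.ne', ha.le, hb.le]
    · rintro p ⟨hp₁, hp₂, hp⟩ q ⟨hq₁, hq₂, hq⟩ μ ν hμ hν hμν
      refine ⟨by simp only [Prod.fst_add, Prod.smul_fst, smul_eq_mul]; positivity,
        by simp only [Prod.snd_add, Prod.smul_snd, smul_eq_mul]; positivity, ?_⟩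
      calc (μ • p + ν • q).1 / a + (μ • p + ν • q).2 / b
          = μ * (p.1 / a + p.2 / b) + ν * (q.1 / a + q.2 / b) := by
            simp only [Prod.fst_add, Prod.smul_fst, smul_eq_mul, Prod.snd_add, Prod.smul_snd]; ring
        _ ≤ μ * 1 + ν * 1 := by gcongr
        _ = 1 := by rw [mul_one, mul_one, hμν]
  · rintro ⟨x, y⟩ ⟨hx, hy, hxy⟩
    have hmem := (convex_convexHull ℝ ({((0 : ℝ), (0 : ℝ)), (a, 0), (0, b)} : Set (ℝ × ℝ))).sum_mem
      (t := univ) (w := ![1 - x / a - y / b, x / a, y / b]) (z := ![(0, 0), (a, 0), (0, b)])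
      (by
        intro i _
        fin_cases i <;> simp only [Fin.reduceFinMk, Matrix.cons_val] <;>
          first | linarith | positivity)
      (by
        simp only [Fin.sum_univ_three, Matrix.cons_val_zero, Matrix.cons_val_one, Matrix.cons_val]
        ring)
      (by intro i _; apply subset_convexHull; fin_cases i <;> simp)
    convert hmem using 1
    simp [Fin.sum_univ_three, ha.ne', hb.ne']

theorem smul_convexHull_triangle {a b t : ℝ} (ha : 0 < a) (hb : 0 < b) (ht : 0 < t) :
    t • convexHull ℝ {((0 : ℝ), (0 : ℝ)), (a, 0), (0, b)} =
      {p : ℝ × ℝ | 0 ≤ p.1 ∧ 0 ≤ p.2 ∧ p.1 / a + p.2 / b ≤ t} := by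
  rw [← convexHull_smul, Set.smul_set_insert, Set.smul_set_insert, Set.smul_set_singleton]
  simp only [Prod.smul_mk, smul_eq_mul, mul_zero]
  rw [convexHull_triangle (mul_pos ht ha) (mul_pos ht hb)]
  ext p
  have : p.1 / (t * a) + p.2 / (t * b) = (p.1 / a + p.2 / b) / t := by
    field_simp
  simp only [Set.mem_ofPred_eq, this, div_le_one ht]

theorem ncard_inter_latticeZ2 (S : Set (ℝ × ℝ)) :
    (S ∩ latticeZ2).ncard = {q : ℤ × ℤ | ((q.1 : ℝ), (q.2 : ℝ)) ∈ S}.ncard := by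
  have hrange : latticeZ2 = Set.range (Prod.map ((↑) : ℤ → ℝ) ((↑) : ℤ → ℝ)) := by
    ext p
    simp [latticeZ2, Prod.ext_iff, eq_comm]
  rw [hrange, ← Set.ncard_preimage_of_injective_subset_range
    (Int.cast_injective.prodMap Int.cast_injective) Set.inter_subset_right, Set.preimage_inter,
    Set.preimage_range, Set.inter_univ]
  rfl

theorem Set.ncard_union_preimage_add_ncard_inter_preimage {α : Type*} (e : α ≃ α)
    {A : Set α} (hA : A.Finite) :
    (A ∪ e ⁻¹' A).ncard + (A ∩ e ⁻¹' A).ncard = 2 * A.ncard := by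
  rw [Set.ncard_union_add_ncard_inter _ _ hA (hA.preimage e.injective.injOn),
    Set.ncard_preimage_of_injective_subset_range e.injective (by simp), two_mul]

theorem Irrational.floor_add_floor_of_add_eq_intCast {x y : ℝ} (hx : Irrational x) {n : ℤ}
    (hxy : x + y = n) : ⌊x⌋ + ⌊y⌋ = n - 1 := by
  have hceil : ⌈x⌉ = ⌊x⌋ + 1 :=
    (Int.ceil_eq_floor_add_one_iff_notMem x).2 fun ⟨m, hm⟩ => hx.ne_int m hm.symm
  rw [show y = n + -x by linarith, Int.floor_intCast_add, Int.floor_neg, hceil]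
  ring

def latticeTriangle (h k : ℝ) (t : ℕ) : Set (ℤ × ℤ) :=
  {q | 0 ≤ q.1 ∧ 0 ≤ q.2 ∧ (q.1 : ℝ) / h + q.2 / k ≤ t}

def levelRegion (h k : ℝ) (t : ℕ) : Set (ℤ × ℤ) :=
  {p | p.1 ≤ t ∧ -(p.1 * h) ≤ p.2 ∧ (p.2 : ℝ) ≤ p.1 * k}

noncomputable def levelCoords (k : ℝ) : ℤ × ℤ ≃ ℤ × ℤ where
  toFun q := (q.1 + ⌈((q.2 - q.1 : ℤ) : ℝ) / k⌉, q.2 - q.1)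
  invFun p := (p.1 - ⌈(p.2 : ℝ) / k⌉, p.1 - ⌈(p.2 : ℝ) / k⌉ + p.2)
  left_inv q := by ext <;> simp
  right_inv p := by ext <;> simp

theorem levelRegion_eq_preimage {h k : ℝ} (hh : 0 < h) (hk : 0 < k) (hhk : 1 / h + 1 / k = 1)
    (t : ℕ) : levelRegion h k t = (levelCoords k).symm ⁻¹' latticeTriangle h k t := by
  ext ⟨s, d⟩
  have hinv : 1 / h = 1 - 1 / k := by linarith
  simp only [levelRegion, latticeTriangle, levelCoords, Set.mem_ofPred_eq, Set.mem_preimage,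
    Equiv.coe_fn_symm_mk]
  set c := ⌈(d : ℝ) / k⌉ with hc
  have h₁ : 0 ≤ s - c ↔ (d : ℝ) ≤ s * k := by
    rw [sub_nonneg, hc, Int.ceil_le, div_le_iff₀ hk]
  have h₂ : 0 ≤ s - c + d ↔ -(s * h) ≤ (d : ℝ) := by
    rw [show s - c + d = s - (c - d) by ring, sub_nonneg, hc, ← Int.ceil_sub_intCast, Int.ceil_le,
      show (d : ℝ) / k - d = -d / h by rw [div_eq_mul_one_div _ h, hinv]; ring, div_le_iff₀ hh]
    constructor <;> intro <;> linarith
  have h₃ : ((s - c : ℤ) : ℝ) / h + ((s - c + d : ℤ) : ℝ) / k ≤ t ↔ s ≤ t := by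
    have : ((s - c : ℤ) : ℝ) / h + ((s - c + d : ℤ) : ℝ) / k = ((s - c : ℤ) : ℝ) + d / k := by
      push_cast; rw [div_eq_mul_one_div _ h, hinv]; ring
    rw [this, ← Int.cast_natCast, ← Int.ceil_le, Int.ceil_intCast_add, hc, sub_add_cancel]
  rw [h₁, h₂, h₃]
  tauto

theorem levelRegion_eq_coe {h k : ℝ} (hh : 0 < h) (hk : 0 < k) (t : ℕ) :
    levelRegion h k t = ↑(((range (t + 1)).sigma fun s => Icc (-⌊s * h⌋) ⌊s * k⌋).image
      fun x => ((x.1 : ℤ), x.2)) := by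
  ext ⟨s, d⟩
  simp only [levelRegion, Set.mem_ofPred_eq, coe_image, Set.mem_image, mem_coe, mem_sigma,
    mem_range, mem_Icc, Prod.mk.injEq, Sigma.exists]
  constructor
  · rintro ⟨hst, hdh, hdk⟩
    have hs : 0 ≤ s := by
      have : (0 : ℝ) ≤ s * (h + k) := by linarith
      exact_mod_cast nonneg_of_mul_nonneg_left this (by linarith)
    lift s to ℕ using hs
    refine ⟨s, d, ⟨by omega, ?_, ?_⟩, rfl, rfl⟩
    · rw [neg_le, Int.le_floor]; push_cast at hdh ⊢; linarith
    · rw [Int.le_floor]; exact_mod_cast hdk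
  · rintro ⟨s, d, ⟨hst, hdh, hdk⟩, rfl, rfl⟩
    refine ⟨by omega, ?_, ?_⟩
    · rw [neg_le, Int.le_floor] at hdh; push_cast at hdh ⊢; linarith
    · rw [Int.le_floor] at hdk; exact_mod_cast hdk

theorem ncard_latticeTriangle_eq_sum {h k : ℝ} (hh : 0 < h) (hk : 0 < k) (hhk : 1 / h + 1 / k = 1)
    (t : ℕ) : ((latticeTriangle h k t).ncard : ℤ) =
      ∑ s ∈ range (t + 1), (⌊s * h⌋ + ⌊s * k⌋ + 1) := by
  rw [← Set.ncard_preimage_of_injective_subset_range (levelCoords k).symm.injective (by simp),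
    ← levelRegion_eq_preimage hh hk hhk, levelRegion_eq_coe hh hk, Set.ncard_coe_finset,
    card_image_of_injective _ fun x y hxy => ?_, card_sigma, Nat.cast_sum]
  · refine sum_congr rfl fun s _ => ?_
    have : 0 ≤ ⌊(s : ℝ) * h⌋ := Int.floor_nonneg.2 (by positivity)
    have : 0 ≤ ⌊(s : ℝ) * k⌋ := Int.floor_nonneg.2 (by positivity)
    rw [Int.card_Icc, Int.toNat_of_nonneg (by omega)]
    ring
  · obtain ⟨s, d⟩ := x
    obtain ⟨s', d'⟩ := y
    simp only [Prod.mk.injEq, Nat.cast_inj] at hxy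
    obtain ⟨rfl, rfl⟩ := hxy
    rfl

theorem finite_latticeTriangle {h k : ℝ} (hh : 0 < h) (hk : 0 < k) (hhk : 1 / h + 1 / k = 1)
    (t : ℕ) : (latticeTriangle h k t).Finite := by
  refine Set.Finite.of_preimage ?_ (levelCoords k).symm.surjective
  rw [← levelRegion_eq_preimage hh hk hhk, levelRegion_eq_coe hh hk]
  exact finite_toSet _

theorem two_mul_sum_floor_add_floor {h k : ℝ} (hh : Irrational h) {β : ℤ} (hβ : h + k = β)
    (t : ℕ) : 2 * ∑ s ∈ range (t + 1), (⌊s * h⌋ + ⌊s * k⌋ + 1) = β * t ^ 2 + β * t + 2 := by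
  induction t with
  | zero => simp
  | succ t ih =>
    have hfloor : ⌊((t + 1 : ℕ) : ℝ) * h⌋ + ⌊((t + 1 : ℕ) : ℝ) * k⌋ = (t + 1) * β - 1 := by
      refine (hh.natCast_mul t.succ_ne_zero).floor_add_floor_of_add_eq_intCast ?_
      rw [← mul_add, hβ]; push_cast; ring
    rw [sum_range_succ, mul_add, ih, hfloor]
    push_cast
    ring

theorem two_mul_ncard_latticeTriangle {h k : ℝ} (hh : Irrational h) (hhpos : 0 < h)
    (hkpos : 0 < k) (hhk : 1 / h + 1 / k = 1) {β : ℤ} (hβ : h + k = β) (t : ℕ) :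
    2 * ((latticeTriangle h k t).ncard : ℤ) = β * t ^ 2 + β * t + 2 := by
  rw [ncard_latticeTriangle_eq_sum hhpos hkpos hhk, two_mul_sum_floor_add_floor hh hβ]

theorem ncard_latticeTriangle_inter_reflection {h k : ℝ} (hh : 0 < h) (t : ℕ) :
    ((latticeTriangle h k t ∩
      Equiv.prodCongr (Equiv.refl ℤ) (Equiv.neg ℤ) ⁻¹' latticeTriangle h k t).ncard : ℤ) =
      ⌊t * h⌋ + 1 := by
  have hsegment : latticeTriangle h k t ∩
      Equiv.prodCongr (Equiv.refl ℤ) (Equiv.neg ℤ) ⁻¹' latticeTriangle h k t =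
      ↑((Icc 0 ⌊t * h⌋).map (Function.Embedding.sectL ℤ (0 : ℤ))) := by
    ext ⟨m, n⟩
    simp only [latticeTriangle, Set.mem_inter_iff, Set.mem_preimage, Set.mem_ofPred_eq, coe_map,
      Set.mem_image, mem_coe, mem_Icc, Function.Embedding.sectL_apply, Prod.mk.injEq,
      Equiv.prodCongr_apply, Prod.map, Equiv.refl_apply, Equiv.neg_apply]
    constructor
    · rintro ⟨⟨hm, hn, hmn⟩, -, hn', -⟩
      obtain rfl : n = 0 := by omega
      refine ⟨m, ⟨hm, ?_⟩, rfl, rfl⟩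
      rw [Int.le_floor, ← div_le_iff₀ hh]
      simpa using hmn
    · rintro ⟨m, ⟨hm, hmt⟩, rfl, rfl⟩
      rw [Int.le_floor, ← div_le_iff₀ hh] at hmt
      simp [hm, hmt]
  have : 0 ≤ ⌊(t : ℝ) * h⌋ := Int.floor_nonneg.2 (by positivity)
  rw [hsegment, Set.ncard_coe_finset, card_map, Int.card_Icc, sub_zero,
    Int.toNat_of_nonneg (by omega)]

theorem setOf_intCast_mem_smul_union_reflection {h k : ℝ} (hh : 0 < h) (hk : 0 < k) {t : ℕ}
    (ht : 0 < t) :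
    {q : ℤ × ℤ | ((q.1 : ℝ), (q.2 : ℝ)) ∈
        (t : ℝ) • (convexHull ℝ {((0 : ℝ), (0 : ℝ)), (h, 0), (0, k)} ∪
          (fun p : ℝ × ℝ => (p.1, -p.2)) '' convexHull ℝ {((0 : ℝ), (0 : ℝ)), (h, 0), (0, k)})} =
      latticeTriangle h k t ∪
        Equiv.prodCongr (Equiv.refl ℤ) (Equiv.neg ℤ) ⁻¹' latticeTriangle h k t := by
  have hinv : Function.Involutive fun p : ℝ × ℝ => (p.1, -p.2) := fun p => by simp
  rw [Set.smul_set_union, ← Set.image_smul_comm _ _ _ fun p => by simp,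
    hinv.image_eq_preimage_symm, smul_convexHull_triangle hh hk (Nat.cast_pos.2 ht)]
  ext q
  simp [latticeTriangle]

theorem stmt_8_general (h k : ℝ) (hh : Irrational h)
    (hhpos : 0 < h) (hkpos : 0 < k) (hhk : 1 / h + 1 / k = 1)
    (β : ℤ) (hβ : h + k = (β : ℝ))
    (T P : Set (ℝ × ℝ))
    (hT : T = convexHull ℝ {((0 : ℝ), (0 : ℝ)), (h, 0), (0, k)})
    (hP : P = T ∪ (fun p : ℝ × ℝ => (p.1, -p.2)) '' T)
    (t : ℕ) (ht : 0 < t) :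
    ((((t : ℝ) • P) ∩ latticeZ2).ncard : ℝ) =
      (h + k) * t ^ 2 + (h + k) * t - (⌊h * t⌋ : ℝ) + 1 := by
  have hsplit := Set.ncard_union_preimage_add_ncard_inter_preimage
    (Equiv.prodCongr (Equiv.refl ℤ) (Equiv.neg ℤ)) (finite_latticeTriangle hhpos hkpos hhk t)
  zify at hsplit
  rw [ncard_latticeTriangle_inter_reflection hhpos,
    two_mul_ncard_latticeTriangle hh hhpos hkpos hhk hβ] at hsplit
  rw [ncard_inter_latticeZ2, hP, hT, setOf_intCast_mem_smul_union_reflection hhpos hkpos ht, hβ,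
    mul_comm h]
  rify at hsplit
  linarith

theorem stmt_8 (h k : ℝ) (hh : Irrational h) (hk : Irrational k)
    (hhpos : 0 < h) (hkpos : 0 < k) (hhk : 1 / h + 1 / k = 1)
    (β : ℤ) (hβ : h + k = (β : ℝ))
    (T P : Set (ℝ × ℝ))
    (hT : T = convexHull ℝ {((0 : ℝ), (0 : ℝ)), (h, 0), (0, k)})
    (hP : P = T ∪ (fun p : ℝ × ℝ => (p.1, -p.2)) '' T)
    (t : ℕ) (ht : 0 < t) :
    ((((t : ℝ) • P) ∩ latticeZ2).ncard : ℝ) =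
      (h + k) * t ^ 2 + (h + k) * t - (⌊h * t⌋ : ℝ) + 1 :=
  stmt_8_general h k hh hhpos hkpos hhk β hβ T P hT hP t ht
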